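/- Let λ₁ ≥ λ₂ > 0 and let u_{λᵢ} be the unique solutions of ε²Δu = λᵢ m u e^u in Ω with u = u₀ on ∂Ω, where 0 < u_{λᵢ} ≤ u₀. Then 0 ≤ u_{λ₂} − u_{λ₁} ≤ (λ₁/λ₂ − 1)(1 + (λ₁/λ₂) e^{(λ₁/λ₂) u₀}) u₀ pointwise in Ω. -/

import Mathlib

open Real Set MeasureTheory

/-- The Euclidean Laplacian, written as the sum of second directional derivatives
along the standard basis directions. -/
noncomputable def lap {N : ℕ} (u : EuclideanSpace ℝ (Fin N) → ℝ)
    (x : EuclideanSpace ℝ (Fin N)) : ℝ :=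
  ∑ i : Fin N, fderiv ℝ (fun y => fderiv ℝ u y (EuclideanSpace.single i 1)) x
    (EuclideanSpace.single i 1)

/-! Both inequalities come from the weak maximum principle: if `Δv ≥ 0` in a bounded open set,
then `v` is bounded above by its boundary values. (Perturbing `v` by `η‖x‖²` makes it strictly
subharmonic, so it cannot have an interior maximum, where `Δ ≤ 0`.) Since `t ↦ t eᵗ` is increasing
on `[0, ∞)`, `u₁ - u₂` is subharmonic wherever it is positive, which forces `u₁ ≤ u₂`. Then
`w = λ₁u₂ - λ₂u₁` satisfies `ε²Δw = λ₁λ₂m(u₂e^{u₂} - u₁e^{u₁}) ≥ 0`, so `w ≤ (λ₁ - λ₂)u₀`, and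
as `u₂ > 0` this gives `u₂ - u₁ ≤ (λ₁/λ₂ - 1)u₀`, which is below the stated bound. -/

open Filter Topology Bornology InnerProductSpace Laplacian Module

theorem IsLocalMax.deriv_deriv_nonpos {g : ℝ → ℝ} {t : ℝ} (h : IsLocalMax g t)
    (hc : ContinuousAt g t) : deriv (deriv g) t ≤ 0 := by
  -- A positive second derivative would make `t` a local minimum as well, so `g` would be
  -- locally constant.
  by_contra! hpos
  have hmin : IsLocalMin g t := isLocalMin_of_deriv_deriv_pos hpos h.deriv_eq_zero hc
  have hconst : g =ᶠ[𝓝 t] fun _ => g t :=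
    (hmin.and h).mono fun s hs => le_antisymm hs.2 hs.1
  refine hpos.ne' ?_
  rw [hconst.deriv.deriv_eq]
  simp

section NormedSpace

variable {E F : Type*} [NormedAddCommGroup E] [NormedSpace ℝ E] [NormedAddCommGroup F]
  [NormedSpace ℝ F] {x : E}

theorem fderiv_fun_fderiv_apply {f : E → F} (hf : DifferentiableAt ℝ (fderiv ℝ f) x) (v e : E) :
    fderiv ℝ (fun y => fderiv ℝ f y e) x v = fderiv ℝ (fderiv ℝ f) x v e := by
  rw [fderiv_clm_apply hf (differentiableAt_const e)]
  simp

theorem IsLocalMax.fderiv_fderiv_apply_self_nonpos {f : E → ℝ} (h : IsLocalMax f x)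
    (hf : ContDiffAt ℝ 2 f x) (e : E) : fderiv ℝ (fderiv ℝ f) x e e ≤ 0 := by
  set ℓ : ℝ → E := fun t => x + t • e
  have hℓ : ∀ t, HasDerivAt ℓ e t := fun t => by
    have := ((hasDerivAt_id t).smul_const e).const_add x
    rwa [one_smul] at this
  have hℓ0 : ℓ 0 = x := by simp [ℓ]
  have hℓx : Tendsto ℓ (𝓝 0) (𝓝 x) := hℓ0 ▸ (hℓ 0).continuousAt.tendsto
  have hdiff : ∀ᶠ t in 𝓝 0, DifferentiableAt ℝ f (ℓ t) :=
    hℓx.eventually ((hf.eventually (by simp)).mono fun y hy => hy.differentiableAt (by simp))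
  have hderiv : deriv (f ∘ ℓ) =ᶠ[𝓝 0] fun t => fderiv ℝ f (ℓ t) e :=
    hdiff.mono fun t ht => (ht.hasFDerivAt.comp_hasDerivAt t (hℓ t)).deriv
  have hd : DifferentiableAt ℝ (fderiv ℝ f) x :=
    (hf.fderiv_right (m := 1) (by norm_num)).differentiableAt one_ne_zero
  have hF : HasDerivAt (fun t => fderiv ℝ f (ℓ t) e) (fderiv ℝ (fderiv ℝ f) x e e) 0 := by
    rw [← fderiv_fun_fderiv_apply hd]
    exact (hd.clm_apply (differentiableAt_const e)).hasFDerivAt.comp_hasDerivAt_of_eq 0 (hℓ 0)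
      hℓ0.symm
  have hmax : IsLocalMax (f ∘ ℓ) 0 := by
    simpa [IsLocalMax, IsMaxFilter, hℓ0] using hℓx.eventually h
  have := hmax.deriv_deriv_nonpos (hf.continuousAt.comp_of_eq (hℓ 0).continuousAt hℓ0)
  rwa [hderiv.deriv_eq, hF.deriv] at this

end NormedSpace

section InnerProductSpace

variable {E : Type*} [NormedAddCommGroup E] [InnerProductSpace ℝ E] [FiniteDimensional ℝ E]
  {U : Set E} {v : E → ℝ} {x : E} {b : ℝ}

theorem IsLocalMax.laplacian_nonpos (h : IsLocalMax v x) (hv : ContDiffAt ℝ 2 v x) :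
    Δ v x ≤ 0 := by
  rw [laplacian_eq_iteratedFDeriv_stdOrthonormalBasis]
  exact Finset.sum_nonpos fun i _ => by
    simpa [iteratedFDeriv_two_apply] using h.fderiv_fderiv_apply_self_nonpos hv _

theorem laplacian_norm_sq (x : E) : Δ (fun y : E => ‖y‖ ^ 2) x = 2 * finrank ℝ E := by
  have h (v w : E) : fderiv ℝ (fderiv ℝ fun y : E => ‖y‖ ^ 2) x v w = 2 * ⟪v, w⟫_ℝ := by
    rw [fderiv_norm_sq, ((innerSL ℝ (E := E)).hasFDerivAt.const_smul (2 : ℕ)).fderiv]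
    simp only [smul_apply, nsmul_eq_mul, Nat.cast_ofNat]
    rfl
  rw [laplacian_eq_iteratedFDeriv_stdOrthonormalBasis]
  simp [iteratedFDeriv_two_apply, h, mul_comm]

theorem le_of_laplacian_pos_of_frontier_le (hU : IsOpen U) (hUb : IsBounded U)
    (hvc : ContinuousOn v (closure U)) (hv : ContDiffOn ℝ 2 v U) (hΔ : ∀ y ∈ U, 0 < Δ v y)
    (hb : ∀ y ∈ frontier U, v y ≤ b) (hx : x ∈ U) : v x ≤ b := by
  obtain ⟨z, hz, hzmax⟩ := hUb.isCompact_closure.exists_isMaxOn ⟨x, subset_closure hx⟩ hvc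
  have hzU : z ∉ U := fun hzU =>
    (((hzmax.on_subset subset_closure).isLocalMax (hU.mem_nhds hzU)).laplacian_nonpos
      (hv.contDiffAt (hU.mem_nhds hzU))).not_gt (hΔ z hzU)
  exact (hzmax (subset_closure hx)).trans (hb z (hU.frontier_eq ▸ ⟨hz, hzU⟩))

theorem le_of_laplacian_nonneg_of_frontier_le [Nontrivial E] (hU : IsOpen U) (hUb : IsBounded U)
    (hvc : ContinuousOn v (closure U)) (hv : ContDiffOn ℝ 2 v U) (hΔ : ∀ y ∈ U, 0 ≤ Δ v y)
    (hb : ∀ y ∈ frontier U, v y ≤ b) (hx : x ∈ U) : v x ≤ b := by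
  obtain ⟨R, hR⟩ := hUb.subset_closedBall 0
  have hnorm : ∀ y ∈ closure U, ‖y‖ ^ 2 ≤ R ^ 2 := fun y hy => by
    have := closure_minimal hR Metric.isClosed_closedBall hy
    rw [mem_closedBall_zero_iff] at this
    gcongr
  have hnsq : ContDiff ℝ 2 fun y : E => ‖y‖ ^ 2 := contDiff_norm_sq ℝ
  have key (η : ℝ) (hη : 0 < η) : v x ≤ b + η * R ^ 2 := by
    have hperturbed : (v + η • fun y : E => ‖y‖ ^ 2 : E → ℝ) x ≤ b + η * R ^ 2 := by
      refine le_of_laplacian_pos_of_frontier_le hU hUb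
        (hvc.add (hnsq.continuous.continuousOn.const_smul η))
        (hv.add (hnsq.contDiffOn.const_smul η))
        (fun y hy => ?_) (fun y hy => ?_) hx
      · have hsmul : ContDiffAt ℝ 2 (η • fun y : E => ‖y‖ ^ 2) y := hnsq.contDiffAt.const_smul η
        rw [(hv.contDiffAt (hU.mem_nhds hy)).laplacian_add hsmul,
          laplacian_smul η hnsq.contDiffAt, laplacian_norm_sq, smul_eq_mul]
        have := finrank_pos (R := ℝ) (M := E)
        have := hΔ y hy
        positivity
      · have := hnorm y (frontier_subset_closure hy)
        simp only [Pi.add_apply, Pi.smul_apply, smul_eq_mul]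
        nlinarith [hb y hy]
    simp only [Pi.add_apply, Pi.smul_apply, smul_eq_mul] at hperturbed
    nlinarith [norm_nonneg x]
  refine ge_of_tendsto (x := 𝓝[>] (0 : ℝ)) ?_ (eventually_nhdsWithin_of_forall key)
  exact tendsto_nhdsWithin_of_tendsto_nhds (Continuous.tendsto' (by fun_prop) 0 b (by simp))

theorem nonpos_of_laplacian_nonneg_of_pos [Nontrivial E] (hU : IsOpen U) (hUb : IsBounded U)
    (hvc : ContinuousOn v (closure U)) (hv : ContDiffOn ℝ 2 v U)
    (hΔ : ∀ y ∈ U, 0 < v y → 0 ≤ Δ v y) (hb : ∀ y ∈ frontier U, v y ≤ 0) (hx : x ∈ U) :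
    v x ≤ 0 := by
  set P := U ∩ v ⁻¹' Ioi 0
  have hPU : P ⊆ U := inter_subset_left
  have hP : IsOpen P := hv.continuousOn.isOpen_inter_preimage hU isOpen_Ioi
  have hPb : ∀ y ∈ frontier P, v y ≤ 0 := by
    intro y hy
    rw [hP.frontier_eq] at hy
    by_cases hyU : y ∈ U
    · exact not_lt.1 fun hvy => hy.2 ⟨hyU, hvy⟩
    · exact hb y (hU.frontier_eq ▸ ⟨closure_mono hPU hy.1, hyU⟩)
  by_contra! hvx
  exact (le_of_laplacian_nonneg_of_frontier_le hP (hUb.subset hPU) (hvc.mono (closure_mono hPU))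
    (hv.mono hPU) (fun y hy => hΔ y hy.1 hy.2) hPb ⟨hx, hvx⟩).not_gt hvx

end InnerProductSpace

theorem lap_eq_laplacian {N : ℕ} {u : EuclideanSpace ℝ (Fin N) → ℝ}
    {x : EuclideanSpace ℝ (Fin N)} (hu : ContDiffAt ℝ 2 u x) : lap u x = Δ u x := by
  have hd : DifferentiableAt ℝ (fderiv ℝ u) x :=
    (hu.fderiv_right (m := 1) (by norm_num)).differentiableAt one_ne_zero
  rw [laplacian_eq_iteratedFDeriv_orthonormalBasis u (EuclideanSpace.basisFun (Fin N) ℝ)]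
  simp [lap, iteratedFDeriv_two_apply, fderiv_fun_fderiv_apply hd]

theorem mul_exp_le_mul_exp {s t : ℝ} (hs : 0 ≤ s) (hst : s ≤ t) : s * exp s ≤ t * exp t :=
  mul_le_mul hst (exp_le_exp.2 hst) (exp_pos s).le (hs.trans hst)

section MulExpEquation

variable {E : Type*} [NormedAddCommGroup E] [InnerProductSpace ℝ E] [FiniteDimensional ℝ E]
  [Nontrivial E] {Ω : Set E} {u₁ u₂ : E → ℝ} {c a₁ a₂ : ℝ} {x : E}

theorem le_of_laplacian_eq_mul_exp (hΩ : IsOpen Ω) (hΩb : IsBounded Ω) (hc : 0 < c)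
    (ha₂ : 0 ≤ a₂) (ha : a₂ ≤ a₁)
    (hu₁c : ContinuousOn u₁ (closure Ω)) (hu₂c : ContinuousOn u₂ (closure Ω))
    (hu₁ : ContDiffOn ℝ 2 u₁ Ω) (hu₂ : ContDiffOn ℝ 2 u₂ Ω) (hu₂pos : ∀ y ∈ Ω, 0 ≤ u₂ y)
    (heq₁ : ∀ y ∈ Ω, c * Δ u₁ y = a₁ * u₁ y * exp (u₁ y))
    (heq₂ : ∀ y ∈ Ω, c * Δ u₂ y = a₂ * u₂ y * exp (u₂ y))
    (hb : ∀ y ∈ frontier Ω, u₁ y ≤ u₂ y) (hx : x ∈ Ω) : u₁ x ≤ u₂ x := by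
  have hΔ : ∀ y ∈ Ω, 0 < (u₁ - u₂) y → 0 ≤ Δ (u₁ - u₂) y := by
    intro y hy hpos
    rw [Pi.sub_apply, sub_pos] at hpos
    have hc' : c * Δ (u₁ - u₂) y = a₁ * (u₁ y * exp (u₁ y)) - a₂ * (u₂ y * exp (u₂ y)) := by
      rw [(hu₁.contDiffAt (hΩ.mem_nhds hy)).laplacian_sub (hu₂.contDiffAt (hΩ.mem_nhds hy))]
      linear_combination heq₁ y hy - heq₂ y hy
    refine (mul_nonneg_iff_of_pos_left hc).1 (hc' ▸ sub_nonneg.2 ?_)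
    exact mul_le_mul ha (mul_exp_le_mul_exp (hu₂pos y hy) hpos.le)
      (mul_nonneg (hu₂pos y hy) (exp_pos _).le) (ha₂.trans ha)
  exact sub_nonpos.1 <| nonpos_of_laplacian_nonneg_of_pos (v := u₁ - u₂) hΩ hΩb
    (hu₁c.sub hu₂c) (hu₁.sub hu₂) hΔ (fun y hy => sub_nonpos.2 (hb y hy)) hx

theorem mul_sub_mul_le_of_laplacian_eq_mul_exp (hΩ : IsOpen Ω) (hΩb : IsBounded Ω) (hc : 0 < c)
    (ha₁ : 0 ≤ a₁) (ha₂ : 0 ≤ a₂)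
    (hu₁c : ContinuousOn u₁ (closure Ω)) (hu₂c : ContinuousOn u₂ (closure Ω))
    (hu₁ : ContDiffOn ℝ 2 u₁ Ω) (hu₂ : ContDiffOn ℝ 2 u₂ Ω) (hu₁pos : ∀ y ∈ Ω, 0 ≤ u₁ y)
    (hle : ∀ y ∈ Ω, u₁ y ≤ u₂ y)
    (heq₁ : ∀ y ∈ Ω, c * Δ u₁ y = a₁ * u₁ y * exp (u₁ y))
    (heq₂ : ∀ y ∈ Ω, c * Δ u₂ y = a₂ * u₂ y * exp (u₂ y)) {B : ℝ}
    (hb : ∀ y ∈ frontier Ω, a₁ * u₂ y - a₂ * u₁ y ≤ B) (hx : x ∈ Ω) :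
    a₁ * u₂ x - a₂ * u₁ x ≤ B := by
  have hΔ : ∀ y ∈ Ω, 0 ≤ Δ (a₁ • u₂ - a₂ • u₁) y := by
    intro y hy
    have hu₁' := hu₁.contDiffAt (hΩ.mem_nhds hy)
    have hu₂' := hu₂.contDiffAt (hΩ.mem_nhds hy)
    have hau₁ : ContDiffAt ℝ 2 (a₂ • u₁) y := hu₁'.const_smul a₂
    have hau₂ : ContDiffAt ℝ 2 (a₁ • u₂) y := hu₂'.const_smul a₁
    have hc' : c * Δ (a₁ • u₂ - a₂ • u₁) y =
        a₁ * a₂ * (u₂ y * exp (u₂ y) - u₁ y * exp (u₁ y)) := by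
      rw [hau₂.laplacian_sub hau₁, laplacian_smul a₁ hu₂',
        laplacian_smul a₂ hu₁', smul_eq_mul, smul_eq_mul]
      linear_combination a₁ * heq₂ y hy - a₂ * heq₁ y hy
    refine (mul_nonneg_iff_of_pos_left hc).1 (hc' ▸ mul_nonneg (mul_nonneg ha₁ ha₂) ?_)
    exact sub_nonneg.2 (mul_exp_le_mul_exp (hu₁pos y hy) (hle y hy))
  exact le_of_laplacian_nonneg_of_frontier_le (v := a₁ • u₂ - a₂ • u₁) hΩ hΩb
    ((hu₂c.const_smul a₁).sub (hu₁c.const_smul a₂)) ((hu₂.const_smul a₁).sub (hu₁.const_smul a₂))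
    hΔ hb hx

end MulExpEquation

theorem auxiliary_solutions_comparison_general {N : ℕ}
    (Ω : Set (EuclideanSpace ℝ (Fin N)))
    (hΩopen : IsOpen Ω) (hΩbdd : Bornology.IsBounded Ω)
    (ε m u₀ lam₁ lam₂ : ℝ) (hε : 0 < ε) (hm : 0 < m) (hu₀ : 0 < u₀)
    (hlam₂ : 0 < lam₂) (hlam : lam₂ ≤ lam₁)
    (u₁ u₂ : EuclideanSpace ℝ (Fin N) → ℝ)
    (hu₁_cont : ContinuousOn u₁ (closure Ω)) (hu₂_cont : ContinuousOn u₂ (closure Ω))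
    (hu₁_smooth : ContDiffOn ℝ 2 u₁ Ω) (hu₂_smooth : ContDiffOn ℝ 2 u₂ Ω)
    (hu₁_bdd : ∀ x ∈ Ω, 0 < u₁ x ∧ u₁ x ≤ u₀)
    (hu₂_bdd : ∀ x ∈ Ω, 0 < u₂ x ∧ u₂ x ≤ u₀)
    (heq₁ : ∀ x ∈ Ω, ε ^ 2 * lap u₁ x = lam₁ * m * u₁ x * Real.exp (u₁ x))
    (heq₂ : ∀ x ∈ Ω, ε ^ 2 * lap u₂ x = lam₂ * m * u₂ x * Real.exp (u₂ x))
    (hbdry₁ : ∀ x ∈ frontier Ω, u₁ x = u₀)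
    (hbdry₂ : ∀ x ∈ frontier Ω, u₂ x = u₀) :
    ∀ x ∈ Ω, 0 ≤ u₂ x - u₁ x ∧
      u₂ x - u₁ x ≤ (lam₁ / lam₂ - 1) * (1 + lam₁ / lam₂ * Real.exp (lam₁ / lam₂ * u₀)) * u₀ := by
  intro x hx
  have hlam₁ : 0 < lam₁ := hlam₂.trans_le hlam
  -- In dimension zero `lap` is an empty sum, which the equation at `x` rules out.
  have : NeZero N := ⟨by
    rintro rfl
    have h := heq₁ x hx
    have := (hu₁_bdd x hx).1
    simp only [lap, Finset.univ_eq_empty, Finset.sum_empty, mul_zero] at h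
    exact (by positivity : 0 < lam₁ * m * u₁ x * exp (u₁ x)).ne h⟩
  have hΔ₁ : ∀ y ∈ Ω, ε ^ 2 * Δ u₁ y = lam₁ * m * u₁ y * exp (u₁ y) := fun y hy =>
    lap_eq_laplacian (hu₁_smooth.contDiffAt (hΩopen.mem_nhds hy)) ▸ heq₁ y hy
  have hΔ₂ : ∀ y ∈ Ω, ε ^ 2 * Δ u₂ y = lam₂ * m * u₂ y * exp (u₂ y) := fun y hy =>
    lap_eq_laplacian (hu₂_smooth.contDiffAt (hΩopen.mem_nhds hy)) ▸ heq₂ y hy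
  have hle : ∀ y ∈ Ω, u₁ y ≤ u₂ y := fun y hy =>
    le_of_laplacian_eq_mul_exp hΩopen hΩbdd (by positivity) (by positivity) (by gcongr)
      hu₁_cont hu₂_cont hu₁_smooth hu₂_smooth (fun y hy => (hu₂_bdd y hy).1.le) hΔ₁ hΔ₂
      (fun y hy => (hbdry₁ y hy).trans (hbdry₂ y hy).symm |>.le) hy
  have hweighted := mul_sub_mul_le_of_laplacian_eq_mul_exp hΩopen hΩbdd (by positivity)
    (by positivity) (by positivity) hu₁_cont hu₂_cont hu₁_smooth hu₂_smooth
    (fun y hy => (hu₁_bdd y hy).1.le) hle hΔ₁ hΔ₂ (B := (lam₁ * m - lam₂ * m) * u₀)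
    (fun y hy => by rw [hbdry₁ y hy, hbdry₂ y hy, sub_mul]) hx
  refine ⟨sub_nonneg.2 (hle x hx), ?_⟩
  have hρ : 1 ≤ lam₁ / lam₂ := (one_le_div hlam₂).2 hlam
  have hdiff : u₂ x - u₁ x ≤ (lam₁ / lam₂ - 1) * u₀ := by
    rw [div_sub_one hlam₂.ne', div_mul_eq_mul_div, le_div_iff₀ hlam₂]
    refine le_of_mul_le_mul_left ?_ hm
    nlinarith [hweighted, mul_nonneg (mul_nonneg (sub_nonneg.2 hlam) hm.le) (hu₂_bdd x hx).1.le]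
  calc u₂ x - u₁ x ≤ (lam₁ / lam₂ - 1) * 1 * u₀ := by rwa [mul_one]
    _ ≤ _ := by
      gcongr
      exact le_add_of_nonneg_right (by positivity)

theorem auxiliary_solutions_comparison {N : ℕ}
    (Ω : Set (EuclideanSpace ℝ (Fin N)))
    (hΩopen : IsOpen Ω) (hΩbdd : Bornology.IsBounded Ω) (hΩconn : IsConnected Ω)
    (ε m u₀ lam₁ lam₂ : ℝ) (hε : 0 < ε) (hm : 0 < m) (hu₀ : 0 < u₀)
    (hlam₂ : 0 < lam₂) (hlam : lam₂ ≤ lam₁)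
    (u₁ u₂ : EuclideanSpace ℝ (Fin N) → ℝ)
    (hu₁_cont : ContinuousOn u₁ (closure Ω)) (hu₂_cont : ContinuousOn u₂ (closure Ω))
    (hu₁_smooth : ContDiffOn ℝ 2 u₁ Ω) (hu₂_smooth : ContDiffOn ℝ 2 u₂ Ω)
    (hu₁_bdd : ∀ x ∈ Ω, 0 < u₁ x ∧ u₁ x ≤ u₀)
    (hu₂_bdd : ∀ x ∈ Ω, 0 < u₂ x ∧ u₂ x ≤ u₀)
    (heq₁ : ∀ x ∈ Ω, ε ^ 2 * lap u₁ x = lam₁ * m * u₁ x * Real.exp (u₁ x))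
    (heq₂ : ∀ x ∈ Ω, ε ^ 2 * lap u₂ x = lam₂ * m * u₂ x * Real.exp (u₂ x))
    (hbdry₁ : ∀ x ∈ frontier Ω, u₁ x = u₀)
    (hbdry₂ : ∀ x ∈ frontier Ω, u₂ x = u₀) :
    ∀ x ∈ Ω, 0 ≤ u₂ x - u₁ x ∧
      u₂ x - u₁ x ≤ (lam₁ / lam₂ - 1) * (1 + lam₁ / lam₂ * Real.exp (lam₁ / lam₂ * u₀)) * u₀ :=
  auxiliary_solutions_comparison_general Ω hΩopen hΩbdd ε m u₀ lam₁ lam₂ hε hm hu₀ hlam₂ hlam u₁ u₂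
    hu₁_cont hu₂_cont hu₁_smooth hu₂_smooth hu₁_bdd hu₂_bdd heq₁ heq₂ hbdry₁ hbdry₂
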